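/- Let m ≥ 1 be an integer and suppose g_1,…,g_m are holomorphic functions on Δ with |g_l(ζ)| ≤ A_l·e^{B|ζ|} on Δ for some A_l > 0 and B > 0. For each l let (b_j^{(l)})_{j≥0} be the Taylor coefficients at 1 of φ_l(s) := g_l(−Log s), i.e. φ_l(s) = ∑_{j≥0} b_j^{(l)}(1−s)^j on D(1,1), and define d_{l+mj} = b_j^{(l)} for l ∈ {1,…,m}, j ≥ 0. Then for every real C > max(B,1), the series ∑_{n≥1} |d_n|/(n/m)^C converges. -/

import Mathlib

open Complex Real Metric Set

/-- `Δ`, the image of the open disk `D(1,1)` under `s ↦ -Log s`. -/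
noncomputable def borelDelta : Set ℂ :=
  (fun s : ℂ => -Complex.log s) '' Metric.ball (1 : ℂ) 1

/-!
Write `φ(s) = g(-Log s)` and `f(z) = φ(1 - z) = ∑ bⱼ zʲ` on the unit disk. Since
`‖Log s‖ ≤ |log ‖s‖| + π`, the growth bound gives `‖f z‖ ≤ A' (1 + ‖1 - z‖^(-β))` for any
`β ≥ B`; we take `max B 1 < β < C`. The Cauchy estimate with the `L¹` norm of `f` on the circle
of radius `r = 1 - 1/(j+2)` then gives `‖bⱼ‖ = O(j^(β-1))`, because the singularity at `z = 1` only
contributes `∫ ‖1 - r e^{iθ}‖^(-β) dθ = O((1 - r)^(1-β))` when `β > 1`. Hence `‖dₙ‖ = O(n^(β-1))`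
and `∑ ‖dₙ‖ (n/m)^(-C)` converges as `β - 1 - C < -1`.
-/

lemma exp_mul_abs_log_le {t B β : ℝ} (ht : 0 < t) (ht2 : t ≤ 2) (hB : 0 ≤ B) (hBβ : B ≤ β) :
    Real.exp (B * |Real.log t|) ≤ 2 ^ B * (1 + t ^ (-β)) := by
  have h2B : 1 ≤ (2 : ℝ) ^ B := Real.one_le_rpow one_le_two hB
  have htβ : 0 ≤ t ^ (-β) := by positivity
  rcases le_total 1 t with h1 | h1
  · rw [abs_of_nonneg (Real.log_nonneg h1), mul_comm, ← Real.rpow_def_of_pos ht]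
    nlinarith [Real.rpow_le_rpow ht.le ht2 hB]
  · rw [abs_of_nonpos (Real.log_nonpos ht.le h1), mul_neg, ← neg_mul, mul_comm,
      ← Real.rpow_def_of_pos ht]
    nlinarith [Real.rpow_le_rpow_of_exponent_ge ht h1 (neg_le_neg hBβ)]

lemma exp_mul_norm_log_le {s : ℂ} {B β : ℝ} (hs : s ≠ 0) (hs2 : ‖s‖ ≤ 2) (hB : 0 ≤ B)
    (hBβ : B ≤ β) :
    Real.exp (B * ‖Complex.log s‖) ≤ Real.exp (B * π) * 2 ^ B * (1 + ‖s‖ ^ (-β)) := by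
  have hlog : ‖Complex.log s‖ ≤ |Real.log ‖s‖| + π := by
    refine (Complex.norm_le_abs_re_add_abs_im _).trans ?_
    rw [Complex.log_re, Complex.log_im]
    gcongr
    exact Complex.abs_arg_le_pi s
  calc Real.exp (B * ‖Complex.log s‖) ≤ Real.exp (B * |Real.log ‖s‖|) * Real.exp (B * π) := by
        rw [← Real.exp_add, ← mul_add]; gcongr
    _ ≤ 2 ^ B * (1 + ‖s‖ ^ (-β)) * Real.exp (B * π) := by
        gcongr; exact exp_mul_abs_log_le (norm_pos_iff.2 hs) hs2 hB hBβ
    _ = _ := by ring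

lemma norm_comp_neg_log_one_sub_le {φ : ℂ → ℂ} {A B β : ℝ} (hA : 0 ≤ A) (hB : 0 ≤ B)
    (hBβ : B ≤ β) (hφ : ∀ ζ ∈ borelDelta, ‖φ ζ‖ ≤ A * Real.exp (B * ‖ζ‖))
    {z : ℂ} (hz : z ∈ ball (0 : ℂ) 1) :
    ‖φ (-Complex.log (1 - z))‖ ≤ A * Real.exp (B * π) * 2 ^ B * (1 + ‖1 - z‖ ^ (-β)) := by
  rw [mem_ball_zero_iff] at hz
  have hs : 1 - z ∈ ball (1 : ℂ) 1 := by simpa [dist_eq_norm] using hz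
  have hs0 : 1 - z ≠ 0 := by
    rw [sub_ne_zero]
    rintro rfl
    simp at hz
  have hs2 : ‖1 - z‖ ≤ 2 := (norm_sub_le _ _).trans (by rw [norm_one]; linarith)
  calc ‖φ (-Complex.log (1 - z))‖ ≤ A * Real.exp (B * ‖Complex.log (1 - z)‖) := by
        simpa only [norm_neg] using hφ _ ⟨1 - z, hs, rfl⟩
    _ ≤ A * (Real.exp (B * π) * 2 ^ B * (1 + ‖1 - z‖ ^ (-β))) := by
        gcongr; exact exp_mul_norm_log_le hs0 hs2 hB hBβ
    _ = _ := by ring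

lemma norm_one_sub_circleMap_sq (r θ : ℝ) :
    ‖1 - circleMap 0 r θ‖ ^ 2 = (1 - r) ^ 2 + 2 * r * (1 - Real.cos θ) := by
  rw [Complex.sq_norm, Complex.normSq_apply]
  simp only [circleMap, zero_add, sub_re, one_re, sub_im, one_im, mul_re, mul_im, ofReal_re,
    ofReal_im, exp_ofReal_mul_I_re, exp_ofReal_mul_I_im, zero_mul, sub_zero, add_zero]
  linear_combination r ^ 2 * Real.sin_sq_add_cos_sq θ

lemma norm_one_sub_circleMap_ge {r θ : ℝ} (hr : 1 / 2 ≤ r) (hθ : |θ| ≤ π) :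
    (1 - r + |θ| / 4) / 2 ≤ ‖1 - circleMap 0 r θ‖ := by
  have hπ : 1 / 8 ≤ 2 / π ^ 2 := by
    rw [div_le_div_iff₀ (by norm_num) (by positivity)]
    nlinarith [Real.pi_pos, Real.pi_le_four]
  have hcos : |θ| ^ 2 / 8 ≤ 2 * r * (1 - Real.cos θ) := by
    have := Real.cos_le_one_sub_mul_cos_sq hθ
    rw [← sq_abs θ] at this
    have h8 : |θ| ^ 2 / 8 ≤ 1 - Real.cos θ := by nlinarith [sq_nonneg |θ|]
    nlinarith [sq_nonneg |θ|]
  refine le_of_pow_le_pow_left₀ two_ne_zero (norm_nonneg _) ?_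
  rw [norm_one_sub_circleMap_sq]
  nlinarith [sq_nonneg (1 - r - |θ| / 4)]

lemma circleMap_mem_ball (c : ℂ) {r R : ℝ} (hr : |r| < R) (θ : ℝ) :
    circleMap c r θ ∈ ball c R := by
  simpa [dist_eq_norm] using hr

lemma continuous_norm_one_sub_circleMap_rpow {r : ℝ} (hr : |r| < 1) (β : ℝ) :
    Continuous fun θ => ‖1 - circleMap 0 r θ‖ ^ (-β) := by
  refine (continuous_const.sub (continuous_circleMap 0 r)).norm.rpow_const fun θ =>
    Or.inl (norm_ne_zero_iff.2 (sub_ne_zero.2 fun h => ?_))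
  simpa [← h] using circleMap_mem_ball 0 hr θ

lemma integral_add_div_four_rpow_le {a β : ℝ} (ha : 0 < a) (hβ : 1 < β) :
    ∫ θ in (0 : ℝ)..π, (a + θ / 4) ^ (-β) ≤ 4 / (β - 1) * a ^ (1 - β) := by
  have h0 : (0 : ℝ) ∉ Set.uIcc a (a + π / 4) := by
    rw [uIcc_of_le (by linarith [Real.pi_pos])]
    exact fun h => by linarith [h.1]
  rw [intervalIntegral.integral_comp_add_div (fun x => x ^ (-β)) (by norm_num : (4 : ℝ) ≠ 0),
    integral_rpow (Or.inr ⟨by linarith, by simpa using h0⟩), smul_eq_mul, zero_div, add_zero,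
    show -β + 1 = 1 - β by ring]
  have hβ1 : 0 < β - 1 := by linarith
  have hpos : 0 ≤ (a + π / 4) ^ (1 - β) := by positivity
  calc 4 * (((a + π / 4) ^ (1 - β) - a ^ (1 - β)) / (1 - β))
      = 4 / (β - 1) * (a ^ (1 - β) - (a + π / 4) ^ (1 - β)) := by
        rw [← neg_sub β 1, div_neg]; ring
    _ ≤ 4 / (β - 1) * a ^ (1 - β) := by gcongr; linarith

lemma integral_add_abs_div_four_rpow_le {a β : ℝ} (ha : 0 < a) (hβ : 1 < β) :
    ∫ θ in -π..π, (a + |θ| / 4) ^ (-β) ≤ 8 / (β - 1) * a ^ (1 - β) := by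
  set F : ℝ → ℝ := fun θ => (a + |θ| / 4) ^ (-β)
  have hF : Continuous F :=
    (continuous_const.add (continuous_abs.div_const 4)).rpow_const
      fun θ => Or.inl (by positivity : 0 < a + |θ| / 4).ne'
  have hF_even : ∫ θ in -π..0, F θ = ∫ θ in (0 : ℝ)..π, F θ := by
    simpa [F] using (intervalIntegral.integral_comp_neg (a := 0) (b := π) F).symm
  have hF_pos : ∫ θ in (0 : ℝ)..π, F θ = ∫ θ in (0 : ℝ)..π, (a + θ / 4) ^ (-β) :=
    intervalIntegral.integral_congr fun θ hθ => by
      rw [uIcc_of_le Real.pi_pos.le] at hθ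
      simp only [F, abs_of_nonneg hθ.1]
  rw [← intervalIntegral.integral_add_adjacent_intervals (b := 0)
    (hF.intervalIntegrable _ _) (hF.intervalIntegrable _ _), hF_even, hF_pos]
  linarith [integral_add_div_four_rpow_le ha hβ,
    show 8 / (β - 1) * a ^ (1 - β) = 2 * (4 / (β - 1) * a ^ (1 - β)) by ring]

lemma integral_norm_one_sub_circleMap_rpow_le {r β : ℝ} (hr : 1 / 2 ≤ r) (hr1 : r < 1)
    (hβ : 1 < β) :
    ∫ θ in (0 : ℝ)..2 * π, ‖1 - circleMap 0 r θ‖ ^ (-β) ≤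
      2 ^ β * (8 / (β - 1)) * (1 - r) ^ (1 - β) := by
  set F : ℝ → ℝ := fun θ => ‖1 - circleMap 0 r θ‖ ^ (-β)
  have hF : Continuous F :=
    continuous_norm_one_sub_circleMap_rpow (by rw [abs_lt]; constructor <;> linarith) β
  have hF_per : Function.Periodic F (2 * π) := fun θ => by
    simp only [F, periodic_circleMap 0 r θ]
  set G : ℝ → ℝ := fun θ => 2 ^ β * (1 - r + |θ| / 4) ^ (-β)
  have hG : Continuous G :=
    continuous_const.mul <| (continuous_const.add (continuous_abs.div_const 4)).rpow_const
      fun θ => Or.inl (by have := abs_nonneg θ; positivity : 0 < 1 - r + |θ| / 4).ne'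
  have hFG : ∀ θ ∈ Icc (-π) π, F θ ≤ G θ := fun θ hθ => by
    have hpos : 0 < 1 - r + |θ| / 4 := by have := abs_nonneg θ; linarith
    calc F θ ≤ ((1 - r + |θ| / 4) / 2) ^ (-β) :=
          Real.rpow_le_rpow_of_nonpos (by positivity)
            (norm_one_sub_circleMap_ge hr (abs_le.2 hθ)) (by linarith)
      _ = G θ := by
          rw [Real.div_rpow hpos.le zero_le_two, Real.rpow_neg zero_le_two, div_inv_eq_mul,
            mul_comm]
  calc ∫ θ in (0 : ℝ)..2 * π, F θ = ∫ θ in -π..π, F θ := by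
        rw [← zero_add (2 * π), hF_per.intervalIntegral_add_eq 0 (-π), neg_add_eq_sub,
          two_mul, add_sub_cancel_right]
    _ ≤ ∫ θ in -π..π, G θ :=
        intervalIntegral.integral_mono_on (by linarith [Real.pi_pos])
          (hF.intervalIntegrable _ _) (hG.intervalIntegrable _ _) hFG
    _ ≤ 2 ^ β * (8 / (β - 1) * (1 - r) ^ (1 - β)) := by
        rw [intervalIntegral.integral_const_mul]
        gcongr
        exact integral_add_abs_div_four_rpow_le (by linarith) hβ
    _ = _ := by ring

lemma integral_norm_circleMap_le {f : ℂ → ℂ} {A β r : ℝ} (hA : 0 ≤ A) (hβ : 1 < β)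
    (hf : ContinuousOn f (ball 0 1))
    (hbound : ∀ z ∈ ball (0 : ℂ) 1, ‖f z‖ ≤ A * (1 + ‖1 - z‖ ^ (-β)))
    (hr : 1 / 2 ≤ r) (hr1 : r < 1) :
    ∫ θ in (0 : ℝ)..2 * π, ‖f (circleMap 0 r θ)‖ ≤
      A * (2 * π + 2 ^ β * (8 / (β - 1))) * (1 - r) ^ (1 - β) := by
  have hr' : |r| < 1 := by rw [abs_lt]; constructor <;> linarith
  have hmem := circleMap_mem_ball 0 hr'
  have hsing := continuous_norm_one_sub_circleMap_rpow hr' β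
  have hone : 1 ≤ (1 - r) ^ (1 - β) :=
    Real.one_le_rpow_of_pos_of_le_one_of_nonpos (by linarith) (by linarith) (by linarith)
  calc ∫ θ in (0 : ℝ)..2 * π, ‖f (circleMap 0 r θ)‖
      ≤ ∫ θ in (0 : ℝ)..2 * π, A * (1 + ‖1 - circleMap 0 r θ‖ ^ (-β)) :=
        intervalIntegral.integral_mono_on (by positivity)
          ((hf.comp_continuous (continuous_circleMap 0 r) hmem).norm.intervalIntegrable _ _)
          ((continuous_const.mul (continuous_const.add hsing)).intervalIntegrable _ _)
          fun θ _ => hbound _ (hmem θ)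
    _ = A * (2 * π + ∫ θ in (0 : ℝ)..2 * π, ‖1 - circleMap 0 r θ‖ ^ (-β)) := by
        rw [intervalIntegral.integral_const_mul, intervalIntegral.integral_add
          intervalIntegrable_const (hsing.intervalIntegrable _ _), intervalIntegral.integral_const,
          smul_eq_mul, sub_zero, mul_one]
    _ ≤ A * (2 * π * (1 - r) ^ (1 - β) + 2 ^ β * (8 / (β - 1)) * (1 - r) ^ (1 - β)) := by
        gcongr A * ?_
        exact add_le_add (le_mul_of_one_le_right (by positivity) hone)
          (integral_norm_one_sub_circleMap_rpow_le hr hr1 hβ)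
    _ = A * (2 * π + 2 ^ β * (8 / (β - 1))) * (1 - r) ^ (1 - β) := by ring

lemma hasFPowerSeriesOnBall_ofScalars_of_hasSum {b : ℕ → ℂ} {f : ℂ → ℂ}
    (hf : ∀ z ∈ ball (0 : ℂ) 1, HasSum (fun j => b j * z ^ j) (f z)) :
    HasFPowerSeriesOnBall f (FormalMultilinearSeries.ofScalars ℂ b) 0 1 := by
  refine ⟨?_, one_pos, fun {z} hz => ?_⟩
  · refine ENNReal.le_of_forall_nnreal_lt fun ρ hρ => ?_
    refine FormalMultilinearSeries.le_radius_of_summable_norm _ ?_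
    have hρ1 : ((ρ : ℝ) : ℂ) ∈ ball (0 : ℂ) 1 := by simpa using hρ
    simpa [FormalMultilinearSeries.ofScalars_norm] using
      summable_norm_iff.2 (hf _ hρ1).summable
  · rw [← ENNReal.coe_one, eball_coe, NNReal.coe_one] at hz
    simpa [FormalMultilinearSeries.ofScalars_apply_eq, mul_comm] using hf z hz

lemma HasFPowerSeriesOnBall.norm_coeff_le_integral {E : Type*} [NormedAddCommGroup E]
    [NormedSpace ℂ E] [CompleteSpace E] {f : ℂ → E} {p : FormalMultilinearSeries ℂ ℂ E} {c : ℂ}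
    {R : ENNReal} (hf : HasFPowerSeriesOnBall f p c R) {r : ℝ} (hr : 0 < r)
    (hrR : ENNReal.ofReal r < R) (n : ℕ) :
    ‖p n‖ ≤ ((2 * π)⁻¹ * ∫ θ in (0 : ℝ)..2 * π, ‖f (circleMap c r θ)‖) * r⁻¹ ^ n := by
  have hd : DifferentiableOn ℂ f (closedBall c r) := hf.differentiableOn.mono fun z hz =>
    mem_eball.2 (((edist_le_ofReal hr.le).2 hz).trans_lt hrR)
  lift r to NNReal using hr.le
  have hp : p = cauchyPowerSeries f c r :=
    hf.hasFPowerSeriesAt.eq_formalMultilinearSeries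
      (hd.hasFPowerSeriesOnBall (by exact_mod_cast hr)).hasFPowerSeriesAt
  simpa [hp] using norm_cauchyPowerSeries_le f c r n

lemma inv_one_sub_inv_add_two_pow_le_exp (j : ℕ) :
    (1 - ((j : ℝ) + 2)⁻¹)⁻¹ ^ j ≤ Real.exp 1 := by
  have h_inv : (1 - ((j : ℝ) + 2)⁻¹)⁻¹ = 1 + ((j + 1 : ℕ) : ℝ)⁻¹ := by
    rw [show 1 - ((j : ℝ) + 2)⁻¹ = ((j : ℝ) + 1) / ((j : ℝ) + 2) by field_simp; ring, inv_div]
    push_cast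
    field_simp
    ring
  rw [h_inv]
  calc (1 + ((j + 1 : ℕ) : ℝ)⁻¹) ^ j ≤ (1 + ((j + 1 : ℕ) : ℝ)⁻¹) ^ (j + 1) :=
        pow_le_pow_right₀ (le_add_of_nonneg_right (by positivity)) j.le_succ
    _ ≤ Real.exp 1 := Real.one_add_inv_pow_le_exp

lemma exists_norm_coeff_le_rpow {b : ℕ → ℂ} {f : ℂ → ℂ} {A β : ℝ} (hA : 0 ≤ A) (hβ : 1 < β)
    (hf : ∀ z ∈ ball (0 : ℂ) 1, HasSum (fun j => b j * z ^ j) (f z))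
    (hbound : ∀ z ∈ ball (0 : ℂ) 1, ‖f z‖ ≤ A * (1 + ‖1 - z‖ ^ (-β))) :
    ∃ K, ∀ j : ℕ, ‖b j‖ ≤ K * ((j : ℝ) + 1) ^ (β - 1) := by
  have hp := hasFPowerSeriesOnBall_ofScalars_of_hasSum hf
  have hcont : ContinuousOn f (ball 0 1) := by
    simpa only [← ENNReal.coe_one, eball_coe, NNReal.coe_one] using hp.continuousOn
  set K₀ := A * (2 * π + 2 ^ β * (8 / (β - 1)))
  have hK₀ : 0 ≤ K₀ := by
    have : 0 < β - 1 := by linarith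
    positivity
  refine ⟨(2 * π)⁻¹ * K₀ * 2 ^ (β - 1) * Real.exp 1, fun j => ?_⟩
  have hj : (0 : ℝ) < (j : ℝ) + 1 := by positivity
  set r := 1 - ((j : ℝ) + 2)⁻¹
  have hr : 1 / 2 ≤ r := by
    have : ((j : ℝ) + 2)⁻¹ ≤ 2⁻¹ := inv_anti₀ two_pos (by linarith)
    linarith
  have hr1 : r < 1 := by
    have : 0 < ((j : ℝ) + 2)⁻¹ := by positivity
    linarith
  have hcoeff := hp.norm_coeff_le_integral (r := r) (by linarith) (ENNReal.ofReal_lt_one.2 hr1) j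
  rw [FormalMultilinearSeries.ofScalars_norm] at hcoeff
  have hdist : (1 - r) ^ (1 - β) ≤ 2 ^ (β - 1) * ((j : ℝ) + 1) ^ (β - 1) := by
    rw [sub_sub_cancel, Real.inv_rpow (by positivity), ← Real.rpow_neg (by positivity), neg_sub,
      ← Real.mul_rpow zero_le_two hj.le]
    exact Real.rpow_le_rpow (by positivity) (by linarith) (by linarith)
  calc ‖b j‖ ≤ ((2 * π)⁻¹ * ∫ θ in (0 : ℝ)..2 * π, ‖f (circleMap 0 r θ)‖) * r⁻¹ ^ j := hcoeff
    _ ≤ ((2 * π)⁻¹ * (K₀ * (2 ^ (β - 1) * ((j : ℝ) + 1) ^ (β - 1)))) * Real.exp 1 := by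
        gcongr
        · exact (integral_norm_circleMap_le hA hβ hcont hbound hr hr1).trans (by gcongr)
        · exact inv_one_sub_inv_add_two_pow_le_exp j
    _ = _ := by ring

lemma summable_div_div_rpow_of_le {a : ℕ → ℝ} {K p C M : ℝ} (ha : ∀ n, 0 ≤ a n)
    (hle : ∀ n, a n ≤ K * ((n : ℝ) + 1) ^ p) (hpC : p - C < -1) (hM : 0 ≤ M) :
    Summable fun n => a n / (((n : ℝ) + 1) / M) ^ C := by
  have hsum : Summable fun n : ℕ => ((n : ℝ) + 1) ^ (p - C) := by
    simpa using (summable_nat_add_iff 1).2 (Real.summable_nat_rpow.2 hpC)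
  refine Summable.of_nonneg_of_le
    (fun n => div_nonneg (ha n) (Real.rpow_nonneg (div_nonneg (by positivity) hM) C))
    (fun n => ?_) (hsum.mul_left (K * M ^ C))
  have hn : (0 : ℝ) < (n : ℝ) + 1 := by positivity
  rw [Real.div_rpow hn.le hM, div_div_eq_mul_div, Real.rpow_sub hn]
  calc a n * M ^ C / ((n : ℝ) + 1) ^ C ≤ K * ((n : ℝ) + 1) ^ p * M ^ C / ((n : ℝ) + 1) ^ C := by
        gcongr; exact hle n
    _ = _ := by ring

lemma exists_mem_Icc_add_mul {m : ℕ} (hm : 1 ≤ m) (n : ℕ) :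
    ∃ l ∈ Finset.Icc 1 m, ∃ j ≤ n, n + 1 = l + m * j := by
  refine ⟨n % m + 1, ?_, n / m, Nat.div_le_self n m, ?_⟩
  · have := Nat.mod_lt n hm
    simp only [Finset.mem_Icc]
    omega
  · have := Nat.mod_add_div n m
    omega

theorem stmt_16_general (m : ℕ) (hm : 1 ≤ m)
    (g : ℕ → ℂ → ℂ) (A : ℕ → ℝ) (B : ℝ) (hB : 0 < B)
    (hA : ∀ l ∈ Finset.Icc 1 m, 0 < A l)
    (hgbound : ∀ l ∈ Finset.Icc 1 m, ∀ ζ ∈ borelDelta, ‖g l ζ‖ ≤ A l * Real.exp (B * ‖ζ‖))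
    (b : ℕ → ℕ → ℂ)
    (hb : ∀ l ∈ Finset.Icc 1 m, ∀ s ∈ Metric.ball (1 : ℂ) 1,
      HasSum (fun j : ℕ => b l j * (1 - s) ^ j) (g l (-Complex.log s)))
    (d : ℕ → ℂ)
    (hd : ∀ l ∈ Finset.Icc 1 m, ∀ j : ℕ, d (l + m * j) = b l j)
    (C : ℝ) (hC : max B 1 < C) :
    Summable (fun n : ℕ => ‖d (n + 1)‖ / (((n : ℝ) + 1) / (m : ℝ)) ^ C) := by
  obtain ⟨β, hβ_gt, hβC⟩ := exists_between hC
  have hBβ : B ≤ β := (le_max_left B 1).trans hβ_gt.le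
  have hβ : 1 < β := (le_max_right B 1).trans_lt hβ_gt
  have hcoeff : ∀ l ∈ Finset.Icc 1 m,
      ∀ᶠ K in Filter.atTop, ∀ j : ℕ, ‖b l j‖ ≤ K * ((j : ℝ) + 1) ^ (β - 1) := by
    intro l hl
    obtain ⟨K, hK⟩ := exists_norm_coeff_le_rpow (f := fun z => g l (-Complex.log (1 - z)))
      (by have := hA l hl; positivity) hβ
      (fun z hz => by simpa using hb l hl (1 - z) (by simpa [dist_eq_norm] using hz))
      (fun z hz => norm_comp_neg_log_one_sub_le (hA l hl).le hB.le hBβ (hgbound l hl) hz)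
    filter_upwards [Filter.eventually_ge_atTop K] with K' hK' j
    exact (hK j).trans (by gcongr)
  -- such bounds only improve as `K` grows, so the finitely many residues `l` share one `K`
  obtain ⟨K, hK0, hK⟩ :=
    ((Filter.eventually_ge_atTop 0).and ((Filter.eventually_all_finset _).2 hcoeff)).exists
  refine summable_div_div_rpow_of_le (K := K) (fun n => norm_nonneg _) (fun n => ?_)
    (by linarith : β - 1 - C < -1) m.cast_nonneg
  obtain ⟨l, hl, j, hjn, hn⟩ := exists_mem_Icc_add_mul hm n
  rw [hn, hd l hl j]
  exact (hK l hl j).trans (by gcongr)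

theorem stmt_16 (m : ℕ) (hm : 1 ≤ m)
    (g : ℕ → ℂ → ℂ) (A : ℕ → ℝ) (B : ℝ) (hB : 0 < B)
    (hA : ∀ l ∈ Finset.Icc 1 m, 0 < A l)
    (hg : ∀ l ∈ Finset.Icc 1 m, DifferentiableOn ℂ (g l) borelDelta)
    (hgbound : ∀ l ∈ Finset.Icc 1 m, ∀ ζ ∈ borelDelta, ‖g l ζ‖ ≤ A l * Real.exp (B * ‖ζ‖))
    (b : ℕ → ℕ → ℂ)
    (hb : ∀ l ∈ Finset.Icc 1 m, ∀ s ∈ Metric.ball (1 : ℂ) 1,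
      HasSum (fun j : ℕ => b l j * (1 - s) ^ j) (g l (-Complex.log s)))
    (d : ℕ → ℂ)
    (hd : ∀ l ∈ Finset.Icc 1 m, ∀ j : ℕ, d (l + m * j) = b l j)
    (C : ℝ) (hC : max B 1 < C) :
    Summable (fun n : ℕ => ‖d (n + 1)‖ / (((n : ℝ) + 1) / (m : ℝ)) ^ C) :=
  stmt_16_general m hm g A B hB hA hgbound b hb d hd C hC
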